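/- arXiv:1004.3735 — 6 statements merged into one kernel-verified Lean document; each statement's English description precedes it below -/
import Mathlib

section
/- Let A_n be the free associative algebra on n generators over ℂ and P an element of A_n. Then B_2(A_n/⟨P⟩) is isomorphic as a vector space to L_2(A_n)/(L_3(A_n) + (⟨P⟩ ∩ L_2(A_n))), where ⟨P⟩ denotes the two-sided ideal generated by P. -/
/-- `L₂(A)`: the span of commutators. -/
def L2 (K A : Type*) [Field K] [Ring A] [Algebra K A] : Submodule K A :=
  Submodule.span K {z | ∃ a b : A, z = a * b - b * a}

/-- `L₃(A) = [A, L₂(A)]`. -/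
def L3 (K A : Type*) [Field K] [Ring A] [Algebra K A] : Submodule K A :=
  Submodule.span K {z | ∃ a : A, ∃ x ∈ L2 K A, z = a * x - x * a}

/-- `B₂(A) = L₂(A)/L₃(A)`. -/
abbrev B2 (K A : Type*) [Field K] [Ring A] [Algebra K A] :=
  (L2 K A) ⧸ (Submodule.comap (L2 K A).subtype (L3 K A))

/-- The two-sided ideal generated by `P`, as a subspace. -/
def idealGen (K A : Type*) [Field K] [Ring A] [Algebra K A] (P : A) : Submodule K A :=
  Submodule.span K {z | ∃ a b : A, z = a * P * b}

/-!
The quotient map `π : Aₙ → Aₙ/⟨P⟩` is surjective, so it maps `L₂` onto `L₂` and `L₃` onto `L₃`.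
Hence `π` induces a surjection `L₂(Aₙ) → B₂(Aₙ/⟨P⟩)` with kernel
`L₂ ∩ π⁻¹(π L₃) = L₂ ∩ (L₃ + ker π) = L₃ + (ker π ∩ L₂)`, the last step being the modular law
(as `L₃ ⊆ L₂`); finally `ker π = ⟨P⟩`.
-/

namespace Submodule

variable {R V W : Type*} [Ring R] [AddCommGroup V] [Module R V] [AddCommGroup W] [Module R W]

noncomputable def quotEquivOfMapEq (f : V →ₗ[R] W) {p q : Submodule R V} {p' q' : Submodule R W}
    (hp : p.map f = p') (hq : q.map f = q') :
    (q' ⧸ comap q'.subtype p') ≃ₗ[R] q ⧸ comap q.subtype (p ⊔ LinearMap.ker f) := by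
  subst hp hq
  let φ : q →ₗ[R] q.map f ⧸ comap (q.map f).subtype (p.map f) :=
    (comap (q.map f).subtype (p.map f)).mkQ ∘ₗ f.restrict fun x hx => mem_map_of_mem hx
  have hφ : Function.Surjective φ := by
    rintro ⟨⟨_, x, hx, rfl⟩⟩
    exact ⟨⟨x, hx⟩, rfl⟩
  have hker : LinearMap.ker φ = comap q.subtype (p ⊔ LinearMap.ker f) := by
    ext x
    simp [φ, ← comap_map_eq]
  exact (LinearMap.quotKerEquivOfSurjective φ hφ).symm.trans (quotEquivOfEq _ _ hker)

end Submodule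

section Commutators

variable {K A B : Type*} [Field K] [Ring A] [Algebra K A] [Ring B] [Algebra K B]

lemma L3_le_L2 : L3 K A ≤ L2 K A := by
  rw [L3, Submodule.span_le]
  rintro _ ⟨a, x, -, rfl⟩
  exact Submodule.subset_span ⟨a, x, rfl⟩

lemma map_L2_of_surjective (f : A →ₐ[K] B) (hf : Function.Surjective f) :
    (L2 K A).map f.toLinearMap = L2 K B := by
  rw [L2, L2, Submodule.map_span]
  congr 1
  ext z
  constructor
  · rintro ⟨_, ⟨a, b, rfl⟩, rfl⟩
    exact ⟨f a, f b, by simp⟩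
  · rintro ⟨a, b, rfl⟩
    obtain ⟨a, rfl⟩ := hf a
    obtain ⟨b, rfl⟩ := hf b
    exact ⟨a * b - b * a, ⟨a, b, rfl⟩, by simp⟩

lemma map_L3_of_surjective (f : A →ₐ[K] B) (hf : Function.Surjective f) :
    (L3 K A).map f.toLinearMap = L3 K B := by
  rw [L3, L3, Submodule.map_span]
  congr 1
  ext z
  constructor
  · rintro ⟨_, ⟨a, x, hx, rfl⟩, rfl⟩
    rw [← map_L2_of_surjective f hf]
    exact ⟨f a, f x, Submodule.mem_map_of_mem hx, by simp⟩
  · rintro ⟨a, x, hx, rfl⟩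
    rw [← map_L2_of_surjective f hf] at hx
    obtain ⟨x, hx, rfl⟩ := hx
    obtain ⟨a, rfl⟩ := hf a
    exact ⟨a * x - x * a, ⟨a, x, hx, rfl⟩, by simp⟩

noncomputable def B2.equivOfSurjective (f : A →ₐ[K] B) (hf : Function.Surjective f) :
    B2 K B ≃ₗ[K] (L2 K A ⧸ Submodule.comap (L2 K A).subtype
      (L3 K A ⊔ (LinearMap.ker f.toLinearMap ⊓ L2 K A))) :=
  (Submodule.quotEquivOfMapEq f.toLinearMap (map_L3_of_surjective f hf)
    (map_L2_of_surjective f hf)).trans <| Submodule.quotEquivOfEq _ _ <| by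
      rw [← sup_inf_assoc_of_le _ L3_le_L2]
      ext x
      simp

end Commutators

section IdealGen

variable {K A : Type*} [Field K] [Ring A] [Algebra K A]

lemma mul_mem_idealGen_left (P a : A) {x : A} (hx : x ∈ idealGen K A P) :
    a * x ∈ idealGen K A P := by
  have : (idealGen K A P).map (LinearMap.mulLeft K a) ≤ idealGen K A P := by
    rw [idealGen, Submodule.map_span_le]
    rintro _ ⟨c, d, rfl⟩
    exact Submodule.subset_span ⟨a * c, d, by simp [mul_assoc]⟩
  exact this ⟨x, hx, rfl⟩

lemma mul_mem_idealGen_right (P b : A) {x : A} (hx : x ∈ idealGen K A P) :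
    x * b ∈ idealGen K A P := by
  have : (idealGen K A P).map (LinearMap.mulRight K b) ≤ idealGen K A P := by
    rw [idealGen, Submodule.map_span_le]
    rintro _ ⟨c, d, rfl⟩
    exact Submodule.subset_span ⟨c, d * b, by simp [mul_assoc]⟩
  exact this ⟨x, hx, rfl⟩

variable (K) in
def idealGen.toTwoSidedIdeal (P : A) : TwoSidedIdeal A :=
  .mk' (idealGen K A P) (zero_mem _) add_mem neg_mem
    (mul_mem_idealGen_left P _) (mul_mem_idealGen_right P _)

lemma ker_mkAlgHom_eq_idealGen (P : A) :
    LinearMap.ker (RingQuot.mkAlgHom K (fun a b : A => a = P ∧ b = 0)).toLinearMap =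
      idealGen K A P := by
  apply le_antisymm
  · intro x hx
    let I := idealGen.toTwoSidedIdeal K P
    have hI : ∀ y, y ∈ I ↔ y ∈ idealGen K A P := TwoSidedIdeal.mem_mk' _ _ _ _ _ _
    have hP : ∀ ⦃a b : A⦄, a = P ∧ b = 0 → I.ringCon.mk' a = I.ringCon.mk' b := by
      rintro _ _ ⟨rfl, rfl⟩
      rw [map_zero, ← TwoSidedIdeal.mem_ker, TwoSidedIdeal.ker_ringCon_mk', hI]
      exact Submodule.subset_span ⟨1, 1, by simp⟩
    let g := RingQuot.lift ⟨I.ringCon.mk', hP⟩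
    have hg : g (RingQuot.mkAlgHom K _ x) = I.ringCon.mk' x := by
      rw [← RingQuot.lift_mkRingHom_apply _ hP]
      exact congrArg g (DFunLike.congr_fun (RingQuot.mkAlgHom_coe K _) x)
    have hx0 : RingQuot.mkAlgHom K (fun a b : A => a = P ∧ b = 0) x = 0 := hx
    rw [← hI, ← TwoSidedIdeal.ker_ringCon_mk' I, TwoSidedIdeal.mem_ker, ← hg, hx0, map_zero]
  · rw [idealGen, Submodule.span_le]
    rintro _ ⟨a, b, rfl⟩
    have hP : RingQuot.mkAlgHom K (fun a b : A => a = P ∧ b = 0) P = 0 := by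
      simpa using RingQuot.mkAlgHom_rel K (s := fun a b : A => a = P ∧ b = 0) ⟨rfl, rfl⟩
    simp [hP]

end IdealGen

/-- `B₂(Aₙ/⟨P⟩)` is isomorphic as a vector space to
`L₂(Aₙ)/(L₃(Aₙ) + (⟨P⟩ ∩ L₂(Aₙ)))`. -/
theorem stmt1 (n : ℕ) (P : FreeAlgebra ℂ (Fin n)) :
    Nonempty
      (B2 ℂ (RingQuot (fun a b : FreeAlgebra ℂ (Fin n) => a = P ∧ b = 0)) ≃ₗ[ℂ]
        (L2 ℂ (FreeAlgebra ℂ (Fin n)) ⧸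
          Submodule.comap (L2 ℂ (FreeAlgebra ℂ (Fin n))).subtype
            (L3 ℂ (FreeAlgebra ℂ (Fin n)) ⊔
              (idealGen ℂ (FreeAlgebra ℂ (Fin n)) P ⊓ L2 ℂ (FreeAlgebra ℂ (Fin n)))))) := by
  rw [← ker_mkAlgHom_eq_idealGen]
  exact ⟨B2.equivOfSurjective _ (RingQuot.mkAlgHom_surjective ℂ _)⟩
end

section
/- In B_2(A) for any associative algebra A, the identity [Q, q_1 q_2 ⋯ q_n] = Σ_{i=1}^{n} [q_{i+1} ⋯ q_n Q q_1 ⋯ q_{i-1}, q_i] holds, i.e., the difference of the two sides lies in L_3(A). -/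
/-- In `B₂(A)`, `[Q, q₁⋯qₙ] = ∑ᵢ [qᵢ₊₁⋯qₙ Q q₁⋯qᵢ₋₁, qᵢ]`, i.e. the difference of the
two sides lies in `L₃(A)`. -/
theorem stmt2 (A : Type*) [Ring A] [Algebra ℂ A] (n : ℕ) (Q : A) (q : Fin n → A) :
    (Q * (List.ofFn q).prod - (List.ofFn q).prod * Q) -
      ∑ i : Fin n,
        ((((List.ofFn q).drop (i + 1)).prod * Q * ((List.ofFn q).take i).prod) * q i -
          q i * (((List.ofFn q).drop (i + 1)).prod * Q * ((List.ofFn q).take i).prod))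
      ∈ L3 ℂ A := by
  set P := List.ofFn q with hP
  set f : ℕ → A := fun j => (P.drop j).prod * Q * (P.take j).prod with hf
  have hterm : ∀ i : Fin n,
      ((P.drop (i + 1)).prod * Q * (P.take i).prod) * q i -
        q i * ((P.drop (i + 1)).prod * Q * (P.take i).prod) = f (i + 1) - f i := by
    intro i
    have h1 : (P.take (i + 1)).prod = (P.take i).prod * q i := by
      rw [hP, List.prod_take_succ _ _ (by simp [i.isLt])]; simp
    have h2 : (P.drop i).prod = q i * (P.drop (i + 1)).prod := by
      rw [hP, List.drop_eq_getElem_cons (by simp [i.isLt])]; simp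
    simp only [hf, h1, h2]
    noncomm_ring
  have hsum : ∑ i : Fin n,
      (((P.drop (i + 1)).prod * Q * (P.take i).prod) * q i -
        q i * ((P.drop (i + 1)).prod * Q * (P.take i).prod)) = f n - f 0 := by
    rw [Finset.sum_congr rfl (fun i _ => hterm i),
      Fin.sum_univ_eq_sum_range (fun j => f (j + 1) - f j), Finset.sum_range_sub]
  rw [hsum]
  have hlen : P.length = n := by simp [hP]
  have hfn : f n = Q * P.prod := by
    rw [hf]; simp only; rw [← hlen, List.drop_length, List.take_length]; simp
  have hf0 : f 0 = P.prod * Q := by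
    simp [hf]
  rw [hfn, hf0]
  simp only [sub_self]
  exact (L3 ℂ A).zero_mem
end

section
/- For any associative algebra A, elements a,b ∈ A, and positive integers l,k, the identity [a^l b, a^k] = (k/(l+k))·[b, a^{l+k}] holds in B_2(A), i.e., (l+k)[a^l b, a^k] − k[b, a^{l+k}] ∈ L_3(A). -/
section aux

variable {A : Type*} [Ring A] [Algebra ℂ A]

lemma aux_mem_L2 (x y : A) : x * y - y * x ∈ L2 ℂ A :=
  Submodule.subset_span ⟨x, y, rfl⟩

lemma aux_mem_L3 (c x y : A) :
    c * (x * y - y * x) - (x * y - y * x) * c ∈ L3 ℂ A :=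
  Submodule.subset_span ⟨c, x * y - y * x, aux_mem_L2 x y, rfl⟩

/-- The key recurrence, exact in `A` modulo `L3`:
`[x b, a y] - [(a x) b, y] - [(y x) b, a] = [y, [a, x b]] ∈ L3`. -/
lemma aux_rec (a b x y : A) :
    ((x * b) * (a * y) - (a * y) * (x * b))
      - (((a * x) * b) * y - y * ((a * x) * b))
      - (((y * x) * b) * a - a * ((y * x) * b)) ∈ L3 ℂ A := by
  have h := aux_mem_L3 y a (x * b)
  have e : ((x * b) * (a * y) - (a * y) * (x * b))
      - (((a * x) * b) * y - y * ((a * x) * b))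
      - (((y * x) * b) * a - a * ((y * x) * b))
      = y * (a * (x * b) - (x * b) * a) - (a * (x * b) - (x * b) * a) * y := by
    noncomm_ring
  rw [e]; exact h

/-- `[aˡ b, aᵏ⁺¹] ≡ (k+1)·[aˡ⁺ᵏ b, a]` modulo `L3`. -/
lemma aux_S (a b : A) (l k : ℕ) :
    ((a ^ l * b) * a ^ (k + 1) - a ^ (k + 1) * (a ^ l * b))
      - ((k + 1 : ℕ) : ℂ) • ((a ^ (l + k) * b) * a - a * (a ^ (l + k) * b)) ∈ L3 ℂ A := by
  induction k generalizing l with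
  | zero => simp
  | succ k ih =>
    have h1 := aux_rec a (b := b) (a ^ l) (a ^ (k + 1))
    have h2 := ih (l + 1)
    rw [← pow_succ' a (k + 1), ← pow_succ' a l, ← pow_add,
      show k + 1 + l = l + (k + 1) from by omega] at h1
    rw [show l + 1 + k = l + (k + 1) from by omega] at h2
    have h3 := Submodule.add_mem (L3 ℂ A) h1 h2
    convert h3 using 1
    rw [Nat.cast_smul_eq_nsmul, Nat.cast_smul_eq_nsmul, succ_nsmul]
    abel

end aux

/-- In `B₂(A)`, `[aˡb, aᵏ] = (k/(l+k))·[b, aˡ⁺ᵏ]`, i.e.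
`(l+k)[aˡb, aᵏ] − k[b, aˡ⁺ᵏ] ∈ L₃(A)`. -/
theorem stmt4 (A : Type*) [Ring A] [Algebra ℂ A] (a b : A) (l k : ℕ)
    (hl : 0 < l) (hk : 0 < k) :
    ((l + k : ℂ)) • ((a ^ l * b) * a ^ k - a ^ k * (a ^ l * b)) -
      (k : ℂ) • (b * a ^ (l + k) - a ^ (l + k) * b) ∈ L3 ℂ A := by
  obtain ⟨l', rfl⟩ : ∃ l', l = l' + 1 := ⟨l - 1, by omega⟩
  obtain ⟨k', rfl⟩ : ∃ k', k = k' + 1 := ⟨k - 1, by omega⟩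
  have h2 := aux_S a b (l' + 1) k'
  have h3 := aux_S a b 0 (l' + k' + 1)
  simp only [pow_zero, one_mul] at h3
  rw [show 0 + (l' + k' + 1) = l' + 1 + k' from by omega] at h3
  rw [show l' + k' + 1 + 1 = l' + 1 + (k' + 1) from by omega] at h3
  have hmem := Submodule.sub_mem (L3 ℂ A)
    (Submodule.smul_mem (L3 ℂ A) ((l' + 1 + (k' + 1) : ℕ) : ℂ) h2)
    (Submodule.smul_mem (L3 ℂ A) ((k' + 1 : ℕ) : ℂ) h3)
  convert hmem using 1
  match_scalars <;> push_cast <;> ring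
end

section
/- Let A = ℂ⟨x,y⟩/⟨x^d+y^d⟩ with d ≥ 2. If i ≥ d or j ≥ d (with i,j > 0), then [x^i, y^j] = 0 in B_2(A). -/
/-- The relation presenting `ℂ⟨x,y⟩/⟨xᵈ+yᵈ⟩`. -/
def rel2 (d : ℕ) : FreeAlgebra ℂ (Fin 2) → FreeAlgebra ℂ (Fin 2) → Prop :=
  fun a b => a = FreeAlgebra.ι ℂ (0 : Fin 2) ^ d + FreeAlgebra.ι ℂ (1 : Fin 2) ^ d ∧ b = 0

set_option linter.unusedSectionVars false
set_option linter.unusedTactic false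
section Aux

variable {A : Type*} [Ring A] [Algebra ℂ A]

/-- commutator -/
def br (a b : A) : A := a * b - b * a

lemma mem_of_eq {p : Submodule ℂ A} {a b : A} (h : b ∈ p) (e : a = b) : a ∈ p := e ▸ h

lemma pow_congr' (x : A) {a b : ℕ} (h : a = b) : x ^ a = x ^ b := by rw [h]

lemma br_flip (a b : A) : br a b = -br b a := by simp only [br, neg_sub]

lemma br_neg_left (a b : A) : br (-a) b = -br a b := by simp only [br]; noncomm_ring

lemma br_neg_right (a b : A) : br a (-b) = -br a b := by simp only [br]; noncomm_ring

lemma br_mem_L2 (a b : A) : br a b ∈ L2 ℂ A := Submodule.subset_span ⟨a, b, rfl⟩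

lemma swap_mem (a b c : A) : br (a * b) c - br (b * a) c ∈ L3 ℂ A := by
  have h : c * br a b - br a b * c ∈ L3 ℂ A :=
    Submodule.subset_span ⟨c, br a b, br_mem_L2 a b, rfl⟩
  exact mem_of_eq (neg_mem h) (by simp only [br]; noncomm_ring)

lemma leibniz (a b c : A) : br a (b * c) - br (a * b) c - br (a * c) b ∈ L3 ℂ A := by
  have h := swap_mem c a b
  exact mem_of_eq h (by simp only [br]; noncomm_ring)

lemma lem1 (y : A) : ∀ (n : ℕ) (u : A),
    br u (y ^ (n + 1)) - ((n : ℂ) + 1) • br (u * y ^ n) y ∈ L3 ℂ A := by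
  intro n
  induction n with
  | zero => intro u; simp [br]
  | succ n ih =>
    intro u
    have H1 := leibniz u y (y ^ (n + 1))
    rw [show y * y ^ (n + 1) = y ^ (n + 1 + 1) from (pow_succ' y (n + 1)).symm] at H1
    have H2 := ih (u * y)
    rw [show (u * y) * y ^ n = u * y ^ (n + 1) from by rw [mul_assoc, ← pow_succ']] at H2
    exact mem_of_eq (add_mem H1 H2) (by match_scalars <;> push_cast <;> ring)

lemma key (x y : A) (d i j : ℕ) (hdi : d ≤ i) (hd : 0 < d) (hj : 0 < j)
    (h : x ^ d + y ^ d = 0) : x ^ i * y ^ j - y ^ j * x ^ i ∈ L3 ℂ A := by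
  have hxy : x ^ d = -y ^ d := eq_neg_of_add_eq_zero_left h
  have hyx : y ^ d = -x ^ d := eq_neg_of_add_eq_zero_right h
  rcases eq_or_lt_of_le hdi with heq | hlt
  · subst heq
    have hz : x ^ d * y ^ j - y ^ j * x ^ d = 0 := by
      rw [hxy, neg_mul, mul_neg, sub_neg_eq_add, ← pow_add, ← pow_add,
        pow_congr' y (show d + j = j + d by omega), neg_add_cancel]
    rw [hz]; exact zero_mem _
  · obtain ⟨m, rfl⟩ : ∃ m, d = m + 1 := ⟨d - 1, by omega⟩
    obtain ⟨t, rfl⟩ : ∃ t, j = t + 1 := ⟨j - 1, by omega⟩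
    obtain ⟨s, hs1, rfl⟩ : ∃ s, 1 ≤ s ∧ i = m + s + 1 :=
      ⟨i - (m + 1), by omega, by omega⟩
    -- C1 : c + (t+1) • Q ∈ L3
    have H1 := lem1 y t (x ^ s * y ^ (m + 1))
    rw [show (x ^ s * y ^ (m + 1)) * y ^ t = x ^ s * y ^ (m + t + 1) from by
        rw [mul_assoc, ← pow_add, pow_congr' y (show m + 1 + t = m + t + 1 by omega)]] at H1
    rw [show x ^ s * y ^ (m + 1) = -x ^ (m + s + 1) from by
        rw [hyx, mul_neg, ← pow_add, pow_congr' x (show s + (m + 1) = m + s + 1 by omega)],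
      br_neg_left] at H1
    have C1 : br (x ^ (m + s + 1)) (y ^ (t + 1))
        + ((t : ℂ) + 1) • br (x ^ s * y ^ (m + t + 1)) y ∈ L3 ℂ A :=
      mem_of_eq (neg_mem H1) (by match_scalars <;> push_cast <;> ring)
    -- C2 : c + (m+s+1) • R ∈ L3
    have H2 := lem1 x (m + s) (y ^ (t + 1))
    rw [br_flip (y ^ (t + 1)) (x ^ (m + s + 1))] at H2
    have swapA := swap_mem (y ^ (t + 1)) (x ^ (m + s)) x
    have swapB := swap_mem (x ^ m) (x ^ s * y ^ (t + 1)) x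
    rw [show x ^ m * (x ^ s * y ^ (t + 1)) = x ^ (m + s) * y ^ (t + 1) from by
        rw [← mul_assoc, ← pow_add]] at swapB
    have C2 : br (x ^ (m + s + 1)) (y ^ (t + 1))
        + ((m : ℂ) + (s : ℂ) + 1) • br (x ^ s * y ^ (t + 1) * x ^ m) x ∈ L3 ℂ A := by
      have comb := add_mem (add_mem H2
        (Submodule.smul_mem _ (((m + s : ℕ) : ℂ) + 1) swapA))
        (Submodule.smul_mem _ (((m + s : ℕ) : ℂ) + 1) swapB)
      exact mem_of_eq (neg_mem comb) (by match_scalars <;> push_cast <;> ring)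
    -- C3 : e - (m+t+2) • Q ∈ L3
    have C3 := lem1 y (m + t + 1) (x ^ s)
    -- C4 : e + (m+1) • R + c ∈ L3
    have H4 := leibniz (x ^ s) (y ^ (t + 1)) (x ^ (m + 1))
    rw [show y ^ (t + 1) * x ^ (m + 1) = -y ^ (m + t + 1 + 1) from by
        rw [hxy, mul_neg, ← pow_add, pow_congr' y (show t + 1 + (m + 1) = m + t + 1 + 1 by omega)],
      br_neg_right,
      show x ^ s * x ^ (m + 1) = x ^ (m + s + 1) from by
        rw [← pow_add, pow_congr' x (show s + (m + 1) = m + s + 1 by omega)]] at H4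
    have H5 := lem1 x m (x ^ s * y ^ (t + 1))
    have C4 : br (x ^ s) (y ^ (m + t + 1 + 1))
        + ((m : ℂ) + 1) • br (x ^ s * y ^ (t + 1) * x ^ m) x
        + br (x ^ (m + s + 1)) (y ^ (t + 1)) ∈ L3 ℂ A :=
      mem_of_eq (neg_mem (add_mem H4 H5)) (by match_scalars <;> push_cast <;> ring)
    -- combination: d(i+j) • Q ∈ L3
    have comb2 := sub_mem (sub_mem (sub_mem
      (Submodule.smul_mem _ ((m : ℂ) + (s : ℂ) + 1) C4)
      (Submodule.smul_mem _ ((m : ℂ) + 1) C2))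
      (Submodule.smul_mem _ ((m : ℂ) + (s : ℂ) + 1) C3))
      (Submodule.smul_mem _ (s : ℂ) C1)
    have hbig : (((m : ℂ) + 1) * ((m : ℂ) + (s : ℂ) + (t : ℂ) + 2)) •
        br (x ^ s * y ^ (m + t + 1)) y ∈ L3 ℂ A :=
      mem_of_eq comb2 (by match_scalars <;> push_cast <;> ring)
    have hcoeff : (((m : ℂ) + 1) * ((m : ℂ) + (s : ℂ) + (t : ℂ) + 2)) ≠ 0 := by
      apply mul_ne_zero
      · exact Nat.cast_add_one_ne_zero m
      · have : (m : ℂ) + (s : ℂ) + (t : ℂ) + 2 = ((m + s + t + 1 : ℕ) : ℂ) + 1 := by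
          push_cast; ring
        rw [this]; exact Nat.cast_add_one_ne_zero _
    have hQ : br (x ^ s * y ^ (m + t + 1)) y ∈ L3 ℂ A := by
      have h2 := Submodule.smul_mem (L3 ℂ A)
        ((((m : ℂ) + 1) * ((m : ℂ) + (s : ℂ) + (t : ℂ) + 2))⁻¹) hbig
      rwa [smul_smul, inv_mul_cancel₀ hcoeff, one_smul] at h2
    have hc : br (x ^ (m + s + 1)) (y ^ (t + 1)) ∈ L3 ℂ A := by
      have h3 := sub_mem C1 (Submodule.smul_mem (L3 ℂ A) ((t : ℂ) + 1) hQ)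
      exact mem_of_eq h3 (by module)
    exact hc

end Aux

/-- In `A = ℂ⟨x,y⟩/⟨xᵈ+yᵈ⟩` with `d ≥ 2`, if `i ≥ d` or `j ≥ d` (and `i,j > 0`), then
`[xⁱ, yʲ] = 0` in `B₂(A)`, i.e. `[xⁱ, yʲ] ∈ L₃(A)`. -/
theorem stmt5 (d : ℕ) (hd : 2 ≤ d) (i j : ℕ) (hi : 0 < i) (hj : 0 < j)
    (h : d ≤ i ∨ d ≤ j) :
    letI x := RingQuot.mkAlgHom ℂ (rel2 d) (FreeAlgebra.ι ℂ (0 : Fin 2))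
    letI y := RingQuot.mkAlgHom ℂ (rel2 d) (FreeAlgebra.ι ℂ (1 : Fin 2))
    x ^ i * y ^ j - y ^ j * x ^ i ∈ L3 ℂ (RingQuot (rel2 d)) := by
  have hrel : (RingQuot.mkAlgHom ℂ (rel2 d) (FreeAlgebra.ι ℂ (0 : Fin 2))) ^ d
      + (RingQuot.mkAlgHom ℂ (rel2 d) (FreeAlgebra.ι ℂ (1 : Fin 2))) ^ d = 0 := by
    have h0 := RingQuot.mkAlgHom_rel ℂ (show rel2 d
      (FreeAlgebra.ι ℂ (0 : Fin 2) ^ d + FreeAlgebra.ι ℂ (1 : Fin 2) ^ d) 0 from ⟨rfl, rfl⟩)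
    simpa [map_add, map_pow] using h0
  rcases h with hle | hle
  · exact key _ _ d i j hle (by omega) hj hrel
  · exact mem_of_eq (neg_mem (key _ _ d j i hle (by omega) hi
      (by rw [add_comm]; exact hrel))) (neg_sub _ _).symm
end

section
/- Let n ≥ 2, d ≥ 2, j > 0, i ≥ 0, and A = ℂ⟨x_1,…,x_n⟩/⟨x^d+y^d⟩ where x=x_1, y=x_2. Then for any a ∈ A, the elements [x^{i+d} a, y^j] and [a y^j, x^{i+d}] are scalar multiples of [x^{i+d} y^j, a] in B_2(A). -/
/-- The relation presenting `ℂ⟨x₁,…,xₙ⟩/⟨xᵈ+yᵈ⟩` where `x = x₁`, `y = x₂`. -/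
def reln (n d : ℕ) (hn : 2 ≤ n) :
    FreeAlgebra ℂ (Fin n) → FreeAlgebra ℂ (Fin n) → Prop :=
  fun a b =>
    a = FreeAlgebra.ι ℂ (⟨0, by omega⟩ : Fin n) ^ d +
        FreeAlgebra.ι ℂ (⟨1, by omega⟩ : Fin n) ^ d ∧ b = 0

section Bracket

variable (K : Type*) {A : Type*} [Field K] [Ring A] [Algebra K A]

/-- The class of `⁅u, v⁆ = u * v - v * u` in `B₂(A) = L₂(A)/L₃(A)`, viewed inside `A ⧸ L₃(A)`. -/
def lieClass (u v : A) : A ⧸ L3 K A := Submodule.Quotient.mk ⁅u, v⁆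

variable {K}

theorem lie_mem_L2 (u v : A) : ⁅u, v⁆ ∈ L2 K A :=
  Submodule.subset_span ⟨u, v, Ring.lie_def u v⟩

theorem lie_lie_mem_L3 (w u v : A) : ⁅w, ⁅u, v⁆⁆ ∈ L3 K A :=
  Submodule.subset_span ⟨w, _, lie_mem_L2 u v, Ring.lie_def _ _⟩

theorem sub_smul_mem_L3_of_lieClass_eq {u v w z : A} {c : K}
    (h : lieClass K u v = c • lieClass K w z) : (u * v - v * u) - c • (w * z - z * w) ∈ L3 K A := by
  rw [← Ring.lie_def, ← Ring.lie_def, ← Submodule.Quotient.eq, Submodule.Quotient.mk_smul]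
  exact h

variable (K)

theorem lieClass_swap (u v : A) : lieClass K v u = -lieClass K u v := by
  rw [lieClass, lieClass, ← Submodule.Quotient.mk_neg]
  congr 1
  simp only [Ring.lie_def, neg_sub]

theorem lieClass_neg_right (u v : A) : lieClass K u (-v) = -lieClass K u v := by
  rw [lieClass, lieClass, ← Submodule.Quotient.mk_neg]
  congr 1
  simp only [Ring.lie_def]; noncomm_ring

theorem lieClass_mul_comm_right (w u v : A) : lieClass K w (u * v) = lieClass K w (v * u) := by
  have h : ⁅w, u * v⁆ - ⁅w, v * u⁆ = ⁅w, ⁅u, v⁆⁆ := by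
    simp only [Ring.lie_def]; noncomm_ring
  rw [lieClass, lieClass, Submodule.Quotient.eq, h]
  exact lie_lie_mem_L3 w u v

theorem lieClass_mul_comm_left (u v w : A) : lieClass K (u * v) w = lieClass K (v * u) w := by
  rw [lieClass_swap, lieClass_mul_comm_right, ← lieClass_swap]

theorem lieClass_mul_cyclic (u v w : A) :
    lieClass K (u * v) w + lieClass K (v * w) u + lieClass K (w * u) v = 0 := by
  have h : ⁅u * v, w⁆ + ⁅v * w, u⁆ + ⁅w * u, v⁆ = 0 := by
    simp only [Ring.lie_def]; noncomm_ring
  simp only [lieClass, ← Submodule.Quotient.mk_add, h, Submodule.Quotient.mk_zero]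

theorem lieClass_pow_succ (z v : A) (k : ℕ) :
    lieClass K (z ^ (k + 1)) v = ((k : K) + 1) • lieClass K z (z ^ k * v) := by
  induction k generalizing v with
  | zero => simp
  | succ k ih =>
    have hcyc := lieClass_mul_cyclic K z (z ^ (k + 1)) v
    have hrot : lieClass K z (z ^ k * v * z) = lieClass K z (z ^ (k + 1) * v) := by
      rw [lieClass_mul_comm_right, ← mul_assoc, ← pow_succ']
    rw [← pow_succ'] at hcyc
    rw [lieClass_swap K z (z ^ (k + 1) * v), lieClass_swap K (z ^ (k + 1)) (v * z), ih,
      ← mul_assoc, hrot] at hcyc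
    push_cast
    linear_combination (norm := module) hcyc

end Bracket

section CharZero

variable {K A : Type*} [Field K] [CharZero K] [Ring A] [Algebra K A]

theorem lieClass_add_lieClass_of_pow_add_pow_eq_zero {x y : A} {d : ℕ}
    (hxy : x ^ (d + 1) + y ^ (d + 1) = 0) (w : A) :
    lieClass K x (x ^ d * w) + lieClass K y (y ^ d * w) = 0 := by
  have hsum : lieClass K (x ^ (d + 1)) w + lieClass K (y ^ (d + 1)) w = 0 := by
    have h : ⁅x ^ (d + 1), w⁆ + ⁅y ^ (d + 1), w⁆ = ⁅x ^ (d + 1) + y ^ (d + 1), w⁆ := by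
      simp only [Ring.lie_def]; noncomm_ring
    rw [lieClass, lieClass, ← Submodule.Quotient.mk_add, h, hxy, Ring.lie_def, zero_mul,
      mul_zero, sub_zero, Submodule.Quotient.mk_zero]
  rw [lieClass_pow_succ, lieClass_pow_succ, ← smul_add] at hsum
  exact (smul_eq_zero.mp hsum).resolve_left (by exact_mod_cast d.succ_ne_zero)

theorem lieClass_eq_smul_of_pow_add_pow_eq_zero {x y : A} {d : ℕ} (hd : 0 < d)
    (hxy : x ^ d + y ^ d = 0) (i : ℕ) {j : ℕ} (hj : 0 < j) (a : A) :
    lieClass K (x ^ (i + d) * a) (y ^ j) =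
        (-(j / (i + d + j)) : K) • lieClass K (x ^ (i + d) * y ^ j) a ∧
      lieClass K (a * y ^ j) (x ^ (i + d)) =
        (-((i + d) / (i + d + j)) : K) • lieClass K (x ^ (i + d) * y ^ j) a := by
  obtain ⟨d, rfl⟩ : ∃ d', d = d' + 1 := ⟨d - 1, by omega⟩
  obtain ⟨j, rfl⟩ : ∃ j', j = j' + 1 := ⟨j - 1, by omega⟩
  have hx : x ^ (i + d + 1) = -(y ^ (d + 1) * x ^ i) := by
    rw [add_assoc, add_comm, pow_add, eq_neg_of_add_eq_zero_left hxy, neg_mul]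
  set S := lieClass K y (y ^ (j + d + 1) * (x ^ i * a))
  have hE1 : lieClass K (x ^ (i + (d + 1)) * a) (y ^ (j + 1)) = ((j : K) + 1) • S := by
    have h : y ^ j * (x ^ (i + d + 1) * a) = -(y ^ (j + d + 1) * (x ^ i * a)) := by
      rw [hx, add_assoc j, pow_add y j]; noncomm_ring
    rw [lieClass_swap, ← add_assoc, lieClass_pow_succ, h, lieClass_neg_right, smul_neg, neg_neg]
  have hE2 : lieClass K (a * y ^ (j + 1)) (x ^ (i + (d + 1))) = ((i : K) + (d + 1)) • S := by
    have h : x ^ (i + d) * (a * y ^ (j + 1)) = x ^ d * (x ^ i * a * y ^ (j + 1)) := by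
      rw [add_comm, pow_add]; noncomm_ring
    have hrot : lieClass K y (y ^ d * (x ^ i * a * y ^ (j + 1))) = S := by
      rw [← mul_assoc, lieClass_mul_comm_right, ← mul_assoc, ← pow_add, add_right_comm]
    rw [lieClass_swap, ← add_assoc, lieClass_pow_succ, h,
      eq_neg_of_add_eq_zero_left (lieClass_add_lieClass_of_pow_add_pow_eq_zero hxy _), hrot]
    push_cast
    module
  have hT : lieClass K (x ^ (i + (d + 1)) * y ^ (j + 1)) a =
      -((i : K) + (d + 1) + (j + 1)) • S := by
    have hcyc := lieClass_mul_cyclic K a (y ^ (j + 1)) (x ^ (i + (d + 1)))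
    rw [lieClass_mul_comm_left K (y ^ (j + 1)), hE1, hE2] at hcyc
    linear_combination (norm := module) hcyc
  have hne : (i : K) + (d + 1) + (j + 1) ≠ 0 := by
    exact_mod_cast (show i + (d + 1) + (j + 1) ≠ 0 by omega)
  refine ⟨?_, ?_⟩
  · rw [hE1, hT, smul_smul]
    congr 1
    push_cast
    field_simp
  · rw [hE2, hT, smul_smul]
    congr 1
    push_cast
    field_simp

end CharZero

/-- In `A = ℂ⟨x₁,…,xₙ⟩/⟨xᵈ+yᵈ⟩` (`n,d ≥ 2`, `x = x₁`, `y = x₂`), for `j > 0`, `i ≥ 0` and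
any `a ∈ A`, the elements `[x^{i+d}a, yʲ]` and `[ayʲ, x^{i+d}]` are scalar multiples of
`[x^{i+d}yʲ, a]` in `B₂(A)`. -/
theorem stmt7 (n d : ℕ) (hn : 2 ≤ n) (hd : 2 ≤ d) (i j : ℕ) (hj : 0 < j)
    (a : RingQuot (reln n d hn)) :
    letI x := RingQuot.mkAlgHom ℂ (reln n d hn) (FreeAlgebra.ι ℂ (⟨0, by omega⟩ : Fin n))
    letI y := RingQuot.mkAlgHom ℂ (reln n d hn) (FreeAlgebra.ι ℂ (⟨1, by omega⟩ : Fin n))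
    (∃ c : ℂ,
      (x ^ (i + d) * a * y ^ j - y ^ j * (x ^ (i + d) * a)) -
        c • (x ^ (i + d) * y ^ j * a - a * (x ^ (i + d) * y ^ j))
        ∈ L3 ℂ (RingQuot (reln n d hn))) ∧
    (∃ c : ℂ,
      (a * y ^ j * x ^ (i + d) - x ^ (i + d) * (a * y ^ j)) -
        c • (x ^ (i + d) * y ^ j * a - a * (x ^ (i + d) * y ^ j))
        ∈ L3 ℂ (RingQuot (reln n d hn))) := by
  have hxy := RingQuot.mkAlgHom_rel ℂ (show reln n d hn (_ ^ d + _ ^ d) 0 from ⟨rfl, rfl⟩)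
  rw [map_add, map_pow, map_pow, map_zero] at hxy
  obtain ⟨h₁, h₂⟩ := lieClass_eq_smul_of_pow_add_pow_eq_zero (K := ℂ) (by omega) hxy i hj a
  exact ⟨⟨_, sub_smul_mem_L3_of_lieClass_eq h₁⟩, ⟨_, sub_smul_mem_L3_of_lieClass_eq h₂⟩⟩
end

section
/- Let B be a filtered associative algebra with an exhaustive ascending filtration B_0 ⊆ B_1 ⊆ ⋯, and let X, Y be filtered subspaces of B (with induced filtrations). Then there is a natural injective graded linear map [gr X, gr Y] ↪ gr[X,Y], where [·,·] denotes the span of commutators. -/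
/-- The previous step of a filtration (`⊥` in degree `0`). -/
def Fprev {K N : Type*} [Field K] [AddCommGroup N] [Module K N]
    (G : ℕ → Submodule K N) : ℕ → Submodule K N
  | 0 => ⊥
  | (m + 1) => G m

/-- The `m`-th piece `G_m/G_{m-1}` of the associated graded of a filtered space. -/
abbrev grPiece {K N : Type*} [Field K] [AddCommGroup N] [Module K N]
    (G : ℕ → Submodule K N) (m : ℕ) :=
  G m ⧸ Submodule.comap (G m).subtype (Fprev G m)

/-- `[X,Y]`: the span of commutators between two subspaces of an algebra. -/
def bracket (K B : Type*) [Field K] [Ring B] [Algebra K B] (X Y : Submodule K B) :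
    Submodule K B :=
  Submodule.span K {z | ∃ x ∈ X, ∃ y ∈ Y, z = x * y - y * x}

/-- Let `B` be a filtered associative algebra (exhaustive ascending filtration `F` with
`F i * F j ⊆ F (i+j)`) and `X, Y ⊆ B` subspaces with the induced filtrations. Then in each
degree `m` there is a natural injective linear map from the degree-`m` piece of
`[gr X, gr Y]` (the span in `gr B` of commutators of classes of elements of `X` and `Y`)
into the degree-`m` piece of `gr [X,Y]`, given by inclusion inside `gr B`. -/
theorem stmt13 (K B : Type*) [Field K] [Ring B] [Algebra K B]
    (F : ℕ → Submodule K B) (hmono : Monotone F) (hexh : (⨆ m, F m) = ⊤)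
    (hmul : ∀ i j, F i * F j ≤ F (i + j)) (X Y : Submodule K B) :
    ∀ m : ℕ,
      ∃ f :
        (Submodule.span K {z : grPiece F m |
            ∃ i j, i + j = m ∧ ∃ x ∈ X ⊓ F i, ∃ y ∈ Y ⊓ F j,
              ∃ h : x * y - y * x ∈ F m, z = Submodule.Quotient.mk ⟨x * y - y * x, h⟩}) →ₗ[K]
        (Submodule.map (Submodule.comap (F m).subtype (Fprev F m)).mkQ
          (Submodule.comap (F m).subtype (bracket K B X Y ⊓ F m))),
      Function.Injective f ∧
        ∀ v, ((f v : grPiece F m)) = (v : grPiece F m) := by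
  intro m
  have hle : Submodule.span K {z : grPiece F m |
        ∃ i j, i + j = m ∧ ∃ x ∈ X ⊓ F i, ∃ y ∈ Y ⊓ F j,
          ∃ h : x * y - y * x ∈ F m, z = Submodule.Quotient.mk ⟨x * y - y * x, h⟩} ≤
      Submodule.map (Submodule.comap (F m).subtype (Fprev F m)).mkQ
        (Submodule.comap (F m).subtype (bracket K B X Y ⊓ F m)) := by
    rw [Submodule.span_le]
    rintro z ⟨i, j, hij, x, hx, y, hy, h, rfl⟩
    refine ⟨⟨x * y - y * x, h⟩, ?_, rfl⟩
    refine ⟨Submodule.subset_span ⟨x, hx.1, y, hy.1, rfl⟩, h⟩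
  exact ⟨Submodule.inclusion hle, Submodule.inclusion_injective hle, fun v => rfl⟩
end
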